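/- arXiv:2504.17687 — 3 statements merged into one kernel-verified Lean document; each statement's English description precedes it below -/
import Mathlib

section
/- Let p be a prime, D ≥ 1, and f_{2D} as above. For x ∈ ℤ_p with v_p(x-1) = l ≥ 1: if 1 ≤ l < D then |f_{2D}(x)|_p = p^{-2l}, and if l ≥ D then |f_{2D}(x)|_p = p^{-(2D-1)}. -/
/-!
Write `f = A + B` with `A = (x - 1)² · ∑_{i < 2D-1} (px)ⁱ` and
`B = p^(2D-1) x^(2D-1) (1 + (p-2)x)`. Since `x ≡ 1 (mod p)`, the geometric sum, `x` and
`1 + (p-2)x ≡ -1` are units, so `‖A‖ = p^(-2l)` and `‖B‖ = p^(-(2D-1))`. The exponents have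
different parity, so the norms differ and `‖A + B‖` is the larger of the two.
-/

open Finset IsUltrametricDist

section Ultrametric

variable {R : Type*} [SeminormedRing R] [NormOneClass R] [IsUltrametricDist R]

lemma norm_one_add_eq_one {y : R} (hy : ‖y‖ < 1) : ‖1 + y‖ = 1 := by
  rw [norm_add_eq_max_of_norm_ne_norm (by simpa using hy.ne'), norm_one, max_eq_left hy.le]

lemma norm_eq_one_of_norm_sub_one_lt_one {x : R} (hx : ‖x - 1‖ < 1) : ‖x‖ = 1 := by
  simpa using norm_one_add_eq_one hx

lemma norm_geom_sum_eq_one {y : R} (hy : ‖y‖ < 1) {n : ℕ} (hn : n ≠ 0) :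
    ‖∑ i ∈ range n, y ^ i‖ = 1 := by
  obtain ⟨m, rfl⟩ := Nat.exists_eq_succ_of_ne_zero hn
  rw [geom_sum_succ, add_comm]
  refine norm_one_add_eq_one ((norm_mul_le _ _).trans_lt ?_)
  calc ‖y‖ * ‖∑ i ∈ range m, y ^ i‖ ≤ ‖y‖ * 1 := by
        gcongr
        exact norm_sum_le_of_forall_le_of_nonneg zero_le_one fun i _ =>
          (_root_.norm_pow_le _ _).trans (pow_le_one₀ (norm_nonneg _) hy.le)
    _ < 1 := by rwa [mul_one]

end Ultrametric

lemma norm_add_eq_zpow_max {E : Type*} [SeminormedAddGroup E] [IsUltrametricDist E]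
    {r : ℝ} (hr : 1 < r) {a b : E} {m n : ℤ} (ha : ‖a‖ = r ^ m) (hb : ‖b‖ = r ^ n)
    (hmn : m ≠ n) : ‖a + b‖ = r ^ max m n := by
  have hmono := zpow_right_strictMono₀ hr
  rw [norm_add_eq_max_of_norm_ne_norm (by rwa [ha, hb, hmono.injective.ne_iff]), ha, hb,
    hmono.monotone.map_max]

namespace PadicInt

variable {p : ℕ} [Fact p.Prime]

lemma norm_p_lt_one : ‖(p : ℤ_[p])‖ < 1 := (norm_lt_one_iff_dvd _).2 dvd_rfl

lemma norm_one_add_p_sub_two_mul {x : ℤ_[p]} (hx : ‖x - 1‖ < 1) :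
    ‖1 + ((p : ℤ_[p]) - 2) * x‖ = 1 := by
  have h : 1 + ((p : ℤ_[p]) - 2) * x = -(1 + (2 * (x - 1) + -x * p)) := by ring
  rw [h, norm_neg]
  exact norm_one_add_eq_one
    (norm_lt_one_add (norm_lt_one_mul hx) (norm_lt_one_mul norm_p_lt_one))

end PadicInt

theorem stmt_5 (p : ℕ) [Fact p.Prime] (D : ℕ) (hD : 1 ≤ D) (x : ℤ_[p]) (l : ℕ) (hl : 1 ≤ l)
    (hval : ‖x - 1‖ = (p : ℝ) ^ (-(l : ℤ))) :
    (l < D →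
      ‖(x - 1) ^ 2 * (∑ i ∈ Finset.range (2 * D - 1), (p : ℤ_[p]) ^ i * x ^ i)
          + (p : ℤ_[p]) ^ (2 * D - 1) * x ^ (2 * D - 1) * (1 + ((p : ℤ_[p]) - 2) * x)‖
        = (p : ℝ) ^ (-(2 * l : ℤ))) ∧
    (D ≤ l →
      ‖(x - 1) ^ 2 * (∑ i ∈ Finset.range (2 * D - 1), (p : ℤ_[p]) ^ i * x ^ i)
          + (p : ℤ_[p]) ^ (2 * D - 1) * x ^ (2 * D - 1) * (1 + ((p : ℤ_[p]) - 2) * x)‖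
        = (p : ℝ) ^ (-(2 * D - 1 : ℤ))) := by
  have hp : (1 : ℝ) < p := mod_cast (Fact.out : p.Prime).one_lt
  have hx1 : ‖x - 1‖ < 1 := hval ▸ zpow_lt_one_of_neg₀ hp (by omega)
  have hx : ‖x‖ = 1 := norm_eq_one_of_norm_sub_one_lt_one hx1
  have hpx : ‖(p : ℤ_[p]) * x‖ < 1 := by
    rw [norm_mul, hx, mul_one]
    exact PadicInt.norm_p_lt_one
  have hA : ‖(x - 1) ^ 2 * (∑ i ∈ range (2 * D - 1), (p : ℤ_[p]) ^ i * x ^ i)‖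
      = (p : ℝ) ^ (-(2 * l : ℤ)) := by
    simp only [← mul_pow]
    rw [norm_mul, norm_pow, norm_geom_sum_eq_one hpx (by omega), mul_one, hval,
      ← zpow_natCast, ← zpow_mul]
    congr 1
    push_cast
    ring
  have hB : ‖(p : ℤ_[p]) ^ (2 * D - 1) * x ^ (2 * D - 1) * (1 + ((p : ℤ_[p]) - 2) * x)‖
      = (p : ℝ) ^ (-(2 * D - 1 : ℤ)) := by
    rw [norm_mul, norm_mul, PadicInt.norm_p_pow, norm_pow, hx, one_pow, mul_one,
      PadicInt.norm_one_add_p_sub_two_mul hx1, mul_one]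
    congr 1
    omega
  rw [norm_add_eq_zpow_max hp hA hB (by omega)]
  exact ⟨fun _ => congrArg _ (by omega), fun _ => congrArg _ (by omega)⟩
end

section
/- (Hensel's Lemma for restricted power series) Let f ∈ ℤ_p{x} and a ∈ ℤ_p with f(a) ≡ 0 mod p and f'(a) ≢ 0 mod p. Then there exists a unique ξ ∈ ℤ_p with f(ξ) = 0 and ξ ≡ a mod p. -/
open Filter

namespace Stmt10Aux

variable {p : ℕ} [Fact p.Prime]

/-- Summability of `g i * c i` when `g → 0`, in `ℤ_[p]`. -/
lemma summable_aux (g c : ℕ → ℤ_[p]) (hg : Tendsto g atTop (nhds 0)) :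
    Summable (fun i => g i * c i) := by
  apply NonarchimedeanAddGroup.summable_of_tendsto_cofinite_zero
  rw [Nat.cofinite_eq_atTop]
  rw [tendsto_zero_iff_norm_tendsto_zero] at hg ⊢
  refine squeeze_zero (fun n => norm_nonneg _) (fun n => ?_) hg
  calc ‖g n * c n‖ ≤ ‖g n‖ * ‖c n‖ := norm_mul_le _ _
    _ ≤ ‖g n‖ * 1 := by
        have := (c n).2
        gcongr
        simpa using this
    _ = ‖g n‖ := mul_one _

lemma dvd_iff_norm (z : ℤ_[p]) : (p : ℤ_[p]) ∣ z ↔ ‖z‖ ≤ (p : ℝ) ^ (-(1 : ℕ) : ℤ) := by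
  rw [PadicInt.norm_le_pow_iff_mem_span_pow, pow_one, Ideal.mem_span_singleton]

lemma dvd_tsum (f : ℕ → ℤ_[p]) (hf : ∀ i, (p : ℤ_[p]) ∣ f i) :
    (p : ℤ_[p]) ∣ ∑' i, f i := by
  rw [dvd_iff_norm]
  refine IsUltrametricDist.norm_tsum_le_of_forall_le_of_nonneg ?_ ?_
  · positivity
  · intro i
    exact (dvd_iff_norm (f i)).mp (hf i)

end Stmt10Aux

open Stmt10Aux in
/-- Hensel's lemma for restricted power series over `ℤ_p`. Here the series is given by
its coefficients `a : ℕ → ℤ_[p]` tending to `0`, its value at `x` is `∑' i, a i * x ^ i`,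
and the value of its formal derivative at `x` is `∑' i, (i+1) * a (i+1) * x ^ i`. -/
theorem stmt_10 (p : ℕ) [Fact p.Prime] (a : ℕ → ℤ_[p])
    (ha : Tendsto a atTop (nhds 0)) (a₀ : ℤ_[p])
    (h0 : (p : ℤ_[p]) ∣ ∑' i : ℕ, a i * a₀ ^ i)
    (h1 : ¬ (p : ℤ_[p]) ∣ ∑' i : ℕ, ((i + 1 : ℕ) : ℤ_[p]) * a (i + 1) * a₀ ^ i) :
    ∃! ξ : ℤ_[p], (∑' i : ℕ, a i * ξ ^ i) = 0 ∧ (p : ℤ_[p]) ∣ (ξ - a₀) := by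
  have hp : (1 : ℝ) < p := by
    exact_mod_cast (Fact.out : p.Prime).one_lt
  -- the function and auxiliary series
  set F : ℤ_[p] → ℤ_[p] := fun x => ∑' i, a i * x ^ i with hF
  have ha' : Tendsto (fun i => a (i + 1)) atTop (nhds 0) :=
    ha.comp (tendsto_add_atTop_nat 1)
  have sF : ∀ x : ℤ_[p], Summable (fun i => a i * x ^ i) :=
    fun x => summable_aux a _ ha
  set G : ℤ_[p] → ℤ_[p] → ℤ_[p] :=
    fun x y => ∑' k, a (k + 1) * ∑ j ∈ Finset.range (k + 1), x ^ j * y ^ (k - j) with hGdef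
  have sG : ∀ x y : ℤ_[p],
      Summable (fun k => a (k + 1) * ∑ j ∈ Finset.range (k + 1), x ^ j * y ^ (k - j)) :=
    fun x y => summable_aux _ _ ha'
  set D : ℤ_[p] := ∑' i, ((i + 1 : ℕ) : ℤ_[p]) * a (i + 1) * a₀ ^ i with hDdef
  have sD : Summable (fun i => ((i + 1 : ℕ) : ℤ_[p]) * a (i + 1) * a₀ ^ i) := by
    refine (summable_aux (fun i => a (i + 1))
      (fun i => ((i + 1 : ℕ) : ℤ_[p]) * a₀ ^ i) ha').congr fun i => by ring
  -- key identity : F x - F y = (x - y) * G x y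
  have hsub : ∀ x y : ℤ_[p], F x - F y = (x - y) * G x y := by
    intro x y
    have h1' : F x - F y = ∑' i, (a i * x ^ i - a i * y ^ i) :=
      (Summable.tsum_sub (sF x) (sF y)).symm
    have hsum : Summable (fun i => a i * x ^ i - a i * y ^ i) := (sF x).sub (sF y)
    rw [h1', Summable.tsum_eq_zero_add hsum]
    have h2' : ∀ k : ℕ, a (k + 1) * x ^ (k + 1) - a (k + 1) * y ^ (k + 1)
        = (x - y) * (a (k + 1) * ∑ j ∈ Finset.range (k + 1), x ^ j * y ^ (k - j)) := by
      intro k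
      have := geom_sum₂_mul x y (k + 1)
      simp only [Nat.add_sub_cancel] at this
      rw [← mul_sub, ← this]
      ring
    simp only [pow_zero, mul_one, sub_self, zero_add]
    rw [tsum_congr h2']
    exact (sG x y).tsum_mul_left (x - y)
  -- congruence of G with D mod p
  have hG : ∀ x y : ℤ_[p], (p : ℤ_[p]) ∣ x - a₀ → (p : ℤ_[p]) ∣ y - a₀ →
      (p : ℤ_[p]) ∣ G x y - D := by
    intro x y hx hy
    have : G x y - D = ∑' k, (a (k + 1) * ∑ j ∈ Finset.range (k + 1), x ^ j * y ^ (k - j)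
        - ((k + 1 : ℕ) : ℤ_[p]) * a (k + 1) * a₀ ^ k) := (Summable.tsum_sub (sG x y) sD).symm
    rw [this]
    refine dvd_tsum _ fun k => ?_
    have key : a (k + 1) * ∑ j ∈ Finset.range (k + 1), x ^ j * y ^ (k - j)
        - ((k + 1 : ℕ) : ℤ_[p]) * a (k + 1) * a₀ ^ k
        = a (k + 1) * ∑ j ∈ Finset.range (k + 1), (x ^ j * y ^ (k - j) - a₀ ^ k) := by
      rw [Finset.sum_sub_distrib, Finset.sum_const, Finset.card_range, nsmul_eq_mul]
      ring
    rw [key]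
    refine Dvd.dvd.mul_left ?_ _
    refine Finset.dvd_sum fun j hj => ?_
    have hjk : j ≤ k := Nat.lt_succ_iff.mp (Finset.mem_range.mp hj)
    have hxj : (p : ℤ_[p]) ∣ x ^ j - a₀ ^ j := hx.trans (sub_dvd_pow_sub_pow x a₀ j)
    have hyj : (p : ℤ_[p]) ∣ y ^ (k - j) - a₀ ^ (k - j) :=
      hy.trans (sub_dvd_pow_sub_pow y a₀ (k - j))
    have hsplit : x ^ j * y ^ (k - j) - a₀ ^ k
        = (x ^ j - a₀ ^ j) * y ^ (k - j) + a₀ ^ j * (y ^ (k - j) - a₀ ^ (k - j)) := by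
      have : a₀ ^ j * a₀ ^ (k - j) = a₀ ^ k := by
        rw [← pow_add, Nat.add_sub_cancel' hjk]
      rw [sub_mul, mul_sub, this]; ring
    rw [hsplit]
    exact dvd_add (hxj.mul_right _) (hyj.mul_left _)
  -- D is a unit
  have hDunit : IsUnit D := by
    by_contra h
    exact h1 ((PadicInt.norm_lt_one_iff_dvd D).mp (PadicInt.not_isUnit_iff.mp h))
  obtain ⟨u, hu⟩ := hDunit
  -- the ball around a₀
  set S : Set ℤ_[p] := {x : ℤ_[p] | (p : ℤ_[p]) ∣ x - a₀} with hSdef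
  have hSclosed : IsClosed S := by
    have : S = (fun x : ℤ_[p] => x - a₀) ⁻¹' {z : ℤ_[p] | ‖z‖ ≤ (p : ℝ) ^ (-(1 : ℕ) : ℤ)} := by
      ext x
      simp only [hSdef, Set.mem_setOf_eq, Set.mem_preimage, dvd_iff_norm]
    rw [this]
    exact IsClosed.preimage (by fun_prop)
      (isClosed_le (by fun_prop) continuous_const)
  have : CompleteSpace S := hSclosed.completeSpace_coe
  have : Nonempty S := ⟨⟨a₀, by simp [hSdef]⟩⟩
  -- the Newton map
  have hFdvd : ∀ x : S, (p : ℤ_[p]) ∣ F x.1 := by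
    intro x
    have : F x.1 = (x.1 - a₀) * G x.1 a₀ + F a₀ := by
      rw [← hsub]; ring
    rw [this]
    exact dvd_add (x.2.mul_right _) h0
  set T : S → S := fun x => ⟨x.1 - F x.1 * ↑u⁻¹, by
    have : x.1 - F x.1 * ↑u⁻¹ - a₀ = (x.1 - a₀) - F x.1 * ↑u⁻¹ := by ring
    simp only [hSdef, Set.mem_setOf_eq, this]
    exact dvd_sub x.2 ((hFdvd x).mul_right _)⟩ with hTdef
  -- contraction estimate
  have hcontr : ∀ x y : S, ‖(T x).1 - (T y).1‖ ≤ (p : ℝ)⁻¹ * ‖x.1 - y.1‖ := by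
    intro x y
    have hkey : (T x).1 - (T y).1 = (x.1 - y.1) * ((D - G x.1 y.1) * ↑u⁻¹) := by
      simp only [hTdef]
      have h2' : F x.1 - F y.1 = (x.1 - y.1) * G x.1 y.1 := hsub x.1 y.1
      have h3' : (x.1 - F x.1 * ↑u⁻¹) - (y.1 - F y.1 * ↑u⁻¹)
          = (x.1 - y.1) - (F x.1 - F y.1) * ↑u⁻¹ := by ring
      have h4' : (D : ℤ_[p]) * ↑u⁻¹ = 1 := by rw [← hu]; exact u.mul_inv
      rw [h3', h2']
      calc x.1 - y.1 - (x.1 - y.1) * G x.1 y.1 * ↑u⁻¹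
          = (x.1 - y.1) * (D * ↑u⁻¹) - (x.1 - y.1) * G x.1 y.1 * ↑u⁻¹ := by rw [h4']; ring
        _ = (x.1 - y.1) * ((D - G x.1 y.1) * ↑u⁻¹) := by ring
    have hGD : (p : ℤ_[p]) ∣ D - G x.1 y.1 :=
      (dvd_sub_comm.mp (hG x.1 y.1 x.2 y.2))
    have hnorm : ‖(D - G x.1 y.1) * (↑u⁻¹ : ℤ_[p])‖ ≤ (p : ℝ)⁻¹ := by
      calc ‖(D - G x.1 y.1) * (↑u⁻¹ : ℤ_[p])‖ ≤ ‖D - G x.1 y.1‖ * ‖(↑u⁻¹ : ℤ_[p])‖ :=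
            norm_mul_le _ _
        _ ≤ (p : ℝ)⁻¹ * 1 := by
            refine mul_le_mul ?_ (PadicInt.norm_le_one _) (norm_nonneg _) (by positivity)
            have := (dvd_iff_norm (D - G x.1 y.1)).mp hGD
            simpa using this
        _ = (p : ℝ)⁻¹ := mul_one _
    calc ‖(T x).1 - (T y).1‖ = ‖(x.1 - y.1) * ((D - G x.1 y.1) * ↑u⁻¹)‖ := by rw [hkey]
      _ ≤ ‖x.1 - y.1‖ * ‖(D - G x.1 y.1) * (↑u⁻¹ : ℤ_[p])‖ := norm_mul_le _ _
      _ ≤ ‖x.1 - y.1‖ * (p : ℝ)⁻¹ := by gcongr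
      _ = (p : ℝ)⁻¹ * ‖x.1 - y.1‖ := mul_comm _ _
  -- contracting with constant p⁻¹
  have hppos : (0 : ℝ) ≤ (p : ℝ)⁻¹ := by positivity
  set K : NNReal := ⟨(p : ℝ)⁻¹, hppos⟩ with hKdef
  have hC : ContractingWith K T := by
    constructor
    · rw [← NNReal.coe_lt_coe]
      show (p : ℝ)⁻¹ < 1
      rw [inv_lt_one_iff₀]
      right; exact hp
    · refine LipschitzWith.of_dist_le_mul fun x y => ?_
      simp only [Subtype.dist_eq, dist_eq_norm]
      exact hcontr x y
  set ξ : S := hC.fixedPoint T with hξ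
  have hfix : T ξ = ξ := hC.fixedPoint_isFixedPt
  have hFξ : F ξ.1 = 0 := by
    have h5' : ξ.1 - F ξ.1 * ↑u⁻¹ = ξ.1 := congrArg Subtype.val hfix
    have h6' : F ξ.1 * ↑u⁻¹ = 0 := by linear_combination -h5'
    calc F ξ.1 = F ξ.1 * ↑u⁻¹ * ↑u := by rw [Units.inv_mul_cancel_right]
      _ = 0 := by rw [h6', zero_mul]
  refine ⟨ξ.1, ⟨hFξ, ξ.2⟩, ?_⟩
  rintro z ⟨hz0, hz1⟩
  have hzfix : T ⟨z, hz1⟩ = ⟨z, hz1⟩ := by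
    apply Subtype.ext
    show z - F z * ↑u⁻¹ = z
    have : F z = 0 := hz0
    rw [this, zero_mul, sub_zero]
  have : (⟨z, hz1⟩ : S) = ξ := hC.fixedPoint_unique hzfix
  exact congrArg Subtype.val this
end

section
/- Let f ∈ ℤ_p{x}, α a simple zero of f (f(α)=0, f'(α)≠0), e = v_p(f'(α)), m > e. If D is such that v_p(a_i) > e + m for all coefficients a_i of f with i > D, then the truncation f_D has a zero ξ_D ∈ ℤ_p with ξ_D ≡ α mod p^m and v_p(f_D'(ξ_D)) = e; consequently ∫_{α+p^mℤ_p} |f_D|_p^s dx = ∫_{α+p^mℤ_p} |f|_p^s dx for all s > 0. -/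
/-!
Truncating at `D` moves every coefficient by at most `p^-(e+m)`, hence moves `f` and `f'` by at
most that much on all of `ℤ_p`. So `|f_D'(α)| = p^-e` and `|f_D(α)| < |f_D'(α)|^2`, and Hensel's
lemma gives a root `ξ` of `f_D` with `|f_D'(ξ)| = p^-e`. Near a simple zero `β` of a restricted
power series `g` with `|g'(β)| = ρ`, the first-order Taylor expansion gives `|g(x)| = ρ |x - β|`
whenever `|x - β| < ρ`. At `x = α` for `g = f_D` this yields `p^-e |α - ξ| = |f_D(α)| ≤ p^-(e+m)`.
On the common ball `α + p^m ℤ_p = ξ + p^m ℤ_p` the integrands `|f|^s` and `|f_D|^s` are therefore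
`(p^-e |x - α|)^s` and `(p^-e |x - ξ|)^s`, which have the same integral by translation invariance.
-/

open MeasureTheory Filter Metric Polynomial Topology

noncomputable def tsumEval {R : Type*} [CommSemiring R] [TopologicalSpace R] (a : ℕ → R)
    (x : R) : R :=
  ∑' i, a i * x ^ i

def derivCoeff {R : Type*} [Semiring R] (a : ℕ → R) : ℕ → R :=
  fun i => ((i + 1 : ℕ) : R) * a (i + 1)

lemma IsUltrametricDist.norm_add_eq_left_of_lt {E : Type*} [SeminormedAddGroup E]
    [IsUltrametricDist E] {x y : E} (h : ‖y‖ < ‖x‖) : ‖x + y‖ = ‖x‖ := by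
  rw [norm_add_eq_max_of_norm_ne_norm h.ne', max_eq_left h.le]

lemma exists_pow_eq_taylor {R : Type*} [CommRing R] (x y : R) (n : ℕ) :
    ∃ k : R, x ^ n = y ^ n + n * y ^ (n - 1) * (x - y) + k * (x - y) ^ 2 := by
  obtain ⟨k, hk⟩ := binomExpansion (X ^ n) y (x - y)
  exact ⟨k, by simpa [derivative_X_pow] using hk⟩

section Polynomial

variable {R : Type*}

lemma tsumEval_coeff [CommSemiring R] [TopologicalSpace R] (P : R[X]) (x : R) :
    tsumEval P.coeff x = P.eval x := by
  rw [tsumEval, tsum_eq_sum (s := Finset.range (P.natDegree + 1)), eval_eq_sum_range]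
  intro i hi
  rw [coeff_eq_zero_of_natDegree_lt (by simpa [Nat.lt_succ_iff] using hi), zero_mul]

lemma derivCoeff_coeff [Semiring R] (P : R[X]) : derivCoeff P.coeff = P.derivative.coeff := by
  ext i
  rw [derivCoeff, coeff_derivative, Nat.cast_comm]
  push_cast
  rfl

lemma Polynomial.tendsto_coeff_atTop [Semiring R] [TopologicalSpace R] (P : R[X]) :
    Tendsto P.coeff atTop (𝓝 0) :=
  tendsto_const_nhds.congr' <| (eventually_gt_atTop P.natDegree).mono fun _ hi =>
    (coeff_eq_zero_of_natDegree_lt hi).symm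

variable [CommSemiring R]

lemma PowerSeries.derivative_mk (a : ℕ → R) :
    PowerSeries.derivative R (PowerSeries.mk a) = PowerSeries.mk (derivCoeff a) := by
  ext i
  rw [PowerSeries.coeff_derivative, PowerSeries.coeff_mk, PowerSeries.coeff_mk, derivCoeff,
    Nat.cast_comm]
  push_cast
  rfl

lemma PowerSeries.eval_trunc_mk (a : ℕ → R) (n : ℕ) (x : R) :
    (PowerSeries.trunc n (PowerSeries.mk a)).eval x = ∑ i ∈ Finset.range n, a i * x ^ i := by
  simp [eval, PowerSeries.eval₂_trunc_eq_sum_range]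

lemma PowerSeries.eval_derivative_trunc_mk (a : ℕ → R) (n : ℕ) (x : R) :
    (PowerSeries.trunc (n + 1) (PowerSeries.mk a)).derivative.eval x
      = ∑ i ∈ Finset.range n, derivCoeff a i * x ^ i := by
  rw [← PowerSeries.trunc_derivative, PowerSeries.derivative_mk, PowerSeries.eval_trunc_mk]

end Polynomial

lemma setIntegral_closedBall_comp_sub {G E : Type*} [NormedAddCommGroup G] [MeasurableSpace G]
    [BorelSpace G] [NormedAddCommGroup E] [NormedSpace ℝ E] (μ : Measure G)
    [μ.IsAddRightInvariant] (φ : G → E) (z : G) (r : ℝ) :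
    ∫ x in closedBall z r, φ (x - z) ∂μ = ∫ x in closedBall 0 r, φ x ∂μ := by
  have hpre : (· - z) ⁻¹' closedBall (0 : G) r = closedBall z r := by
    ext x
    simp [dist_eq_norm]
  rw [← hpre]
  exact (measurePreserving_sub_right μ z).setIntegral_preimage_emb
    (MeasurableEquiv.subRight z).measurableEmbedding φ _

namespace PadicInt

variable {p : ℕ} [Fact p.Prime] {a b : ℕ → ℤ_[p]}

lemma norm_mul_le_norm_left (x y : ℤ_[p]) : ‖x * y‖ ≤ ‖x‖ := by
  rw [norm_mul]
  exact mul_le_of_le_one_right (norm_nonneg _) (norm_le_one _)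

lemma norm_mul_le_norm_right (x y : ℤ_[p]) : ‖x * y‖ ≤ ‖y‖ := by
  rw [mul_comm]
  exact norm_mul_le_norm_left y x

lemma summable_of_norm_le (ha : Tendsto a atTop (𝓝 0)) {f : ℕ → ℤ_[p]}
    (h : ∀ i, ‖f i‖ ≤ ‖a i‖) : Summable f := by
  refine NonarchimedeanAddGroup.summable_of_tendsto_cofinite_zero ?_
  rw [Nat.cofinite_eq_atTop, tendsto_zero_iff_norm_tendsto_zero]
  exact squeeze_zero (fun _ => norm_nonneg _) h (tendsto_zero_iff_norm_tendsto_zero.mp ha)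

lemma summable_mul_pow (ha : Tendsto a atTop (𝓝 0)) (x : ℤ_[p]) :
    Summable fun i => a i * x ^ i :=
  summable_of_norm_le ha fun _ => norm_mul_le_norm_left _ _

lemma norm_derivCoeff_sub_le (a b : ℕ → ℤ_[p]) (i : ℕ) :
    ‖derivCoeff a i - derivCoeff b i‖ ≤ ‖a (i + 1) - b (i + 1)‖ := by
  rw [derivCoeff, derivCoeff, ← mul_sub]
  exact norm_mul_le_norm_right _ _

lemma tendsto_derivCoeff (ha : Tendsto a atTop (𝓝 0)) :
    Tendsto (derivCoeff a) atTop (𝓝 0) := by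
  rw [tendsto_zero_iff_norm_tendsto_zero]
  exact squeeze_zero (fun _ => norm_nonneg _) (fun _ => norm_mul_le_norm_right _ _)
    (tendsto_zero_iff_norm_tendsto_zero.mp (ha.comp (tendsto_add_atTop_nat 1)))

lemma norm_tsumEval_sub_le (ha : Tendsto a atTop (𝓝 0)) (hb : Tendsto b atTop (𝓝 0))
    {K : ℝ} (h : ∀ i, ‖a i - b i‖ ≤ K) (x : ℤ_[p]) :
    ‖tsumEval a x - tsumEval b x‖ ≤ K := by
  rw [tsumEval, tsumEval, ← (summable_mul_pow ha x).tsum_sub (summable_mul_pow hb x)]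
  refine IsUltrametricDist.norm_tsum_le_of_forall_le fun i => ?_
  rw [← sub_mul]
  exact (norm_mul_le_norm_left _ _).trans (h i)

lemma exists_tsumEval_eq_taylor (ha : Tendsto a atTop (𝓝 0)) (x y : ℤ_[p]) :
    ∃ w : ℤ_[p], ‖w‖ ≤ 1 ∧
      tsumEval a x = tsumEval a y + (x - y) * tsumEval (derivCoeff a) y + (x - y) ^ 2 * w := by
  choose k hk using exists_pow_eq_taylor x y
  have hsum₁ : Summable fun n => n * a n * y ^ (n - 1) :=
    summable_of_norm_le ha fun n => by
      rw [mul_comm (n : ℤ_[p]), mul_assoc]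
      exact norm_mul_le_norm_left _ _
  have hsum₂ : Summable fun n => a n * k n :=
    summable_of_norm_le ha fun _ => norm_mul_le_norm_left _ _
  have hderiv : ∑' n, n * a n * y ^ (n - 1) = tsumEval (derivCoeff a) y := by
    rw [hsum₁.tsum_eq_zero_add]
    simp [tsumEval, derivCoeff]
  refine ⟨∑' n, a n * k n, IsUltrametricDist.norm_tsum_le_of_forall_le fun _ =>
    (norm_mul_le_norm_right _ _).trans (norm_le_one _), ?_⟩
  have hsum₀ := summable_mul_pow ha y
  rw [← hderiv, ← hsum₁.tsum_mul_left, ← hsum₂.tsum_mul_left, tsumEval, tsumEval,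
    ← hsum₀.tsum_add (hsum₁.mul_left _),
    ← (hsum₀.add (hsum₁.mul_left _)).tsum_add (hsum₂.mul_left _)]
  exact tsum_congr fun n => by rw [hk n]; ring

lemma norm_tsumEval_eq_of_isRoot (ha : Tendsto a atTop (𝓝 0)) {β x : ℤ_[p]} {ρ : ℝ}
    (hβ : tsumEval a β = 0) (hρ : ‖tsumEval (derivCoeff a) β‖ = ρ) (hx : ‖x - β‖ < ρ) :
    ‖tsumEval a x‖ = ρ * ‖x - β‖ := by
  obtain ⟨w, -, hfx⟩ := exists_tsumEval_eq_taylor ha x β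
  have hfactor : tsumEval a x = (x - β) * (tsumEval (derivCoeff a) β + (x - β) * w) := by
    rw [hfx, hβ]
    ring
  have hsmall : ‖(x - β) * w‖ < ‖tsumEval (derivCoeff a) β‖ :=
    (norm_mul_le_norm_left _ _).trans_lt (hx.trans_eq hρ.symm)
  rw [hfactor, norm_mul, IsUltrametricDist.norm_add_eq_left_of_lt hsmall, hρ, mul_comm]

lemma exists_isRoot_of_norm_coeff_sub_le (ha : Tendsto a atTop (𝓝 0)) (P : ℤ_[p][X])
    {α : ℤ_[p]} {ρ ε : ℝ} (hα : tsumEval a α = 0) (hρ : ‖tsumEval (derivCoeff a) α‖ = ρ)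
    (hε : ε < ρ ^ 2) (hcoeff : ∀ i, ‖a i - P.coeff i‖ ≤ ε) :
    ∃ z, P.eval z = 0 ∧ ρ * ‖z - α‖ ≤ ε ∧ ‖P.derivative.eval z‖ = ρ := by
  have hερ : ε < ρ :=
    hε.trans_le (pow_le_of_le_one (hρ ▸ norm_nonneg _) (hρ ▸ norm_le_one _) two_ne_zero)
  have hP'α : ‖P.derivative.eval α‖ = ρ := by
    have hclose := norm_tsumEval_sub_le (tendsto_derivCoeff P.tendsto_coeff_atTop)
      (tendsto_derivCoeff ha) (fun i => (norm_sub_rev _ _).trans_le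
        ((norm_derivCoeff_sub_le a _ i).trans (hcoeff _))) α
    rw [← tsumEval_coeff, ← derivCoeff_coeff, ← hρ,
      ← sub_add_cancel (tsumEval _ α) (tsumEval (derivCoeff a) α), add_comm]
    exact IsUltrametricDist.norm_add_eq_left_of_lt (hclose.trans_lt (hρ ▸ hερ))
  have hPα : ‖P.eval α‖ ≤ ε := by
    simpa [hα, tsumEval_coeff] using norm_tsumEval_sub_le ha P.tendsto_coeff_atTop hcoeff α
  obtain ⟨z, hz, hzα, hz', -⟩ := hensels_lemma (F := P) (a := α)
    (by simpa only [coe_aeval_eq_eval, hP'α] using hPα.trans_lt hε)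
  simp only [coe_aeval_eq_eval, hP'α] at hz hzα hz'
  refine ⟨z, hz, ?_, hz'⟩
  have hnorm := norm_tsumEval_eq_of_isRoot P.tendsto_coeff_atTop (x := α)
    (by rwa [tsumEval_coeff]) (by rw [derivCoeff_coeff, tsumEval_coeff, hz'])
    (by rwa [norm_sub_rev])
  rw [tsumEval_coeff] at hnorm
  rw [norm_sub_rev, ← hnorm]
  exact hPα

lemma setIntegral_closedBall_norm_tsumEval_rpow [MeasurableSpace ℤ_[p]] [BorelSpace ℤ_[p]]
    (μ : Measure ℤ_[p]) [μ.IsAddRightInvariant] (ha : Tendsto a atTop (𝓝 0)) {β : ℤ_[p]}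
    {ρ r : ℝ} (hβ : tsumEval a β = 0) (hρ : ‖tsumEval (derivCoeff a) β‖ = ρ) (hr : r < ρ)
    (s : ℝ) :
    ∫ x in closedBall β r, ‖tsumEval a x‖ ^ s ∂μ = ∫ x in closedBall 0 r, (ρ * ‖x‖) ^ s ∂μ := by
  rw [← setIntegral_closedBall_comp_sub μ (fun x => (ρ * ‖x‖) ^ s) β r]
  refine setIntegral_congr_fun measurableSet_closedBall fun x hx => ?_
  rw [norm_tsumEval_eq_of_isRoot ha hβ hρ ((mem_closedBall_iff_norm.mp hx).trans_lt hr)]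

end PadicInt

theorem stmt_14_general (p : ℕ) [Fact p.Prime]
    [MeasurableSpace ℤ_[p]] [BorelSpace ℤ_[p]]
    (μ : Measure ℤ_[p]) [μ.IsAddHaarMeasure]
    (a : ℕ → ℤ_[p]) (ha : Tendsto a atTop (nhds 0)) (α : ℤ_[p]) (e m D : ℕ)
    (hzero : (∑' i : ℕ, a i * α ^ i) = 0)
    (hval : ‖∑' i : ℕ, ((i + 1 : ℕ) : ℤ_[p]) * a (i + 1) * α ^ i‖ = (p : ℝ) ^ (-(e : ℤ)))
    (hm : e < m)
    (hD : ∀ i : ℕ, D < i → ‖a i‖ < (p : ℝ) ^ (-((e : ℤ) + m))) :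
    (∃ ξ : ℤ_[p],
      (∑ i ∈ Finset.range (D + 1), a i * ξ ^ i) = 0 ∧
      (p : ℤ_[p]) ^ m ∣ (ξ - α) ∧
      ‖∑ i ∈ Finset.range D, ((i + 1 : ℕ) : ℤ_[p]) * a (i + 1) * ξ ^ i‖ = (p : ℝ) ^ (-(e : ℤ))) ∧
    (∀ s : ℝ, 0 < s →
      (∫ x in {x : ℤ_[p] | ‖x - α‖ ≤ (p : ℝ) ^ (-(m : ℤ))},
          ‖∑ i ∈ Finset.range (D + 1), a i * x ^ i‖ ^ s ∂μ)
        = ∫ x in {x : ℤ_[p] | ‖x - α‖ ≤ (p : ℝ) ^ (-(m : ℤ))},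
            ‖∑' i : ℕ, a i * x ^ i‖ ^ s ∂μ) := by
  have hp : (1 : ℝ) < p := mod_cast (Fact.out : p.Prime).one_lt
  set P := PowerSeries.trunc (D + 1) (PowerSeries.mk a)
  have hcoeff : ∀ i, ‖a i - P.coeff i‖ ≤ (p : ℝ) ^ (-((e : ℤ) + m)) := by
    intro i
    rw [PowerSeries.coeff_trunc, PowerSeries.coeff_mk]
    split_ifs with hi
    · simp [zpow_nonneg]
    · simpa using (hD i (by omega)).le
  have hε : (p : ℝ) ^ (-((e : ℤ) + m)) < ((p : ℝ) ^ (-(e : ℤ))) ^ 2 := by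
    rw [← zpow_natCast, ← zpow_mul]
    exact zpow_lt_zpow_right₀ hp (by omega)
  obtain ⟨ξ, hξ, hξα, hξ'⟩ :=
    PadicInt.exists_isRoot_of_norm_coeff_sub_le ha P hzero hval hε hcoeff
  have hξα' : ‖ξ - α‖ ≤ (p : ℝ) ^ (-(m : ℤ)) := by
    rw [neg_add, zpow_add₀ (by positivity)] at hξα
    exact le_of_mul_le_mul_left hξα (zpow_pos (by positivity) _)
  have hme : (p : ℝ) ^ (-(m : ℤ)) < (p : ℝ) ^ (-(e : ℤ)) := zpow_lt_zpow_right₀ hp (by omega)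
  have hball : closedBall α ((p : ℝ) ^ (-(m : ℤ))) = closedBall ξ ((p : ℝ) ^ (-(m : ℤ))) :=
    IsUltrametricDist.closedBall_eq_of_mem (mem_closedBall_iff_norm.mpr hξα')
  refine ⟨⟨ξ, ?_, ?_, ?_⟩, fun s _ => ?_⟩
  · rwa [← PowerSeries.eval_trunc_mk]
  · exact Ideal.mem_span_singleton.mp ((PadicInt.norm_le_pow_iff_mem_span_pow _ m).mp hξα')
  · rw [PowerSeries.eval_derivative_trunc_mk] at hξ'
    exact hξ'
  · simp_rw [← mem_closedBall_iff_norm, Set.ofPred_mem_eq, ← PowerSeries.eval_trunc_mk,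
      ← tsumEval_coeff]
    rw [hball, PadicInt.setIntegral_closedBall_norm_tsumEval_rpow μ P.tendsto_coeff_atTop
        (by rwa [tsumEval_coeff]) (by rw [derivCoeff_coeff, tsumEval_coeff, hξ']) hme, ← hball]
    exact (PadicInt.setIntegral_closedBall_norm_tsumEval_rpow μ ha hzero hval hme s).symm

/-- Near a simple zero `α` of a restricted power series `f` (coefficients `a i → 0`,
`f x = ∑' i, a i * x ^ i`, `f' x = ∑' i, (i+1) * a (i+1) * x ^ i`, `e = v_p(f'(α))`,
`m > e`), if all coefficients of index `> D` have valuation `> e + m`, then the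
truncation `f_D = ∑_{i ≤ D} a i x^i` has a zero `ξ_D ≡ α mod p^m` with
`v_p(f_D'(ξ_D)) = e`, and its integral over the ball `α + p^m ℤ_p` agrees with that
of `f`. -/
theorem stmt_14 (p : ℕ) [Fact p.Prime]
    [MeasurableSpace ℤ_[p]] [BorelSpace ℤ_[p]]
    (μ : Measure ℤ_[p]) [μ.IsAddHaarMeasure] (hμ : μ Set.univ = 1)
    (a : ℕ → ℤ_[p]) (ha : Tendsto a atTop (nhds 0)) (α : ℤ_[p]) (e m D : ℕ)
    (hzero : (∑' i : ℕ, a i * α ^ i) = 0)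
    (hne : (∑' i : ℕ, ((i + 1 : ℕ) : ℤ_[p]) * a (i + 1) * α ^ i) ≠ 0)
    (hval : ‖∑' i : ℕ, ((i + 1 : ℕ) : ℤ_[p]) * a (i + 1) * α ^ i‖ = (p : ℝ) ^ (-(e : ℤ)))
    (hm : e < m)
    (hD : ∀ i : ℕ, D < i → ‖a i‖ < (p : ℝ) ^ (-((e : ℤ) + m))) :
    (∃ ξ : ℤ_[p],
      (∑ i ∈ Finset.range (D + 1), a i * ξ ^ i) = 0 ∧
      (p : ℤ_[p]) ^ m ∣ (ξ - α) ∧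
      ‖∑ i ∈ Finset.range D, ((i + 1 : ℕ) : ℤ_[p]) * a (i + 1) * ξ ^ i‖ = (p : ℝ) ^ (-(e : ℤ))) ∧
    (∀ s : ℝ, 0 < s →
      (∫ x in {x : ℤ_[p] | ‖x - α‖ ≤ (p : ℝ) ^ (-(m : ℤ))},
          ‖∑ i ∈ Finset.range (D + 1), a i * x ^ i‖ ^ s ∂μ)
        = ∫ x in {x : ℤ_[p] | ‖x - α‖ ≤ (p : ℝ) ^ (-(m : ℤ))},
            ‖∑' i : ℕ, a i * x ^ i‖ ^ s ∂μ) :=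
  stmt_14_general p μ a ha α e m D hzero hval hm hD
end
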